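/- arXiv:2410.16620 — 4 statements merged into one kernel-verified Lean document; each statement's English description precedes it below -/
import Mathlib

section
/- There is a universal constant C such that for every K ≥ 1 and all p, q ∈ ℝ³ with |p| ≤ K and |q| ≤ K, the series Σ_{k∈2πℤ³, |k|>4K} | 1/|k|² − 1/(|q+k|²+|p−k|²−|q|²−|p|²) − 1/(|q−k|²+|p+k|²−|q|²−|p|²) | converges and is at most C·K (in particular all denominators are strictly positive on this range of k). Consequently, if B and B′ are any subsets of 2πℤ³ contained in the closed ball of radius K, then Σ_{p∈B} Σ_{q∈B′} Σ_{k∈2πℤ³, |k|>4K} of the same absolute values is at most C·K⁷. -/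
/-!
Absolute convergence and order estimate for the high-momentum tail of the
second-order energy `E⁽²⁾` (Remark 1.1 of the paper).
-/

open Real Finset

/-- The point `2πm` of the lattice `2πℤ³ ⊆ ℝ³`. -/
noncomputable def lat (m : Fin 3 → ℤ) : EuclideanSpace ℝ (Fin 3) :=
  (EuclideanSpace.equiv (Fin 3) ℝ).symm fun i => 2 * Real.pi * (m i : ℝ)

/-- The absolute value of the high-momentum tail summand, for `|k| > 4K`. -/
noncomputable def tailTerm (p q : EuclideanSpace ℝ (Fin 3)) (K : ℝ)
    (k : Fin 3 → ℤ) : ℝ :=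
  if 4 * K < ‖lat k‖ then
    |1 / ‖lat k‖ ^ 2
      - 1 / (‖q + lat k‖ ^ 2 + ‖p - lat k‖ ^ 2 - ‖q‖ ^ 2 - ‖p‖ ^ 2)
      - 1 / (‖q - lat k‖ ^ 2 + ‖p + lat k‖ ^ 2 - ‖q‖ ^ 2 - ‖p‖ ^ 2)|
  else 0

namespace HighMomentum

theorem core_est (K : ℝ) (hK : 1 ≤ K) (p q k : EuclideanSpace ℝ (Fin 3))
    (hp : ‖p‖ ≤ K) (hq : ‖q‖ ≤ K) (hk : 4 * K < ‖k‖) :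
    0 < ‖q + k‖ ^ 2 + ‖p - k‖ ^ 2 - ‖q‖ ^ 2 - ‖p‖ ^ 2 ∧
    0 < ‖q - k‖ ^ 2 + ‖p + k‖ ^ 2 - ‖q‖ ^ 2 - ‖p‖ ^ 2 ∧
    |1 / ‖k‖ ^ 2 - 1 / (‖q + k‖ ^ 2 + ‖p - k‖ ^ 2 - ‖q‖ ^ 2 - ‖p‖ ^ 2)
      - 1 / (‖q - k‖ ^ 2 + ‖p + k‖ ^ 2 - ‖q‖ ^ 2 - ‖p‖ ^ 2)|
      ≤ (16/3) * K^2 / ‖k‖^4 := by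
  set a : ℝ := inner ℝ (q - p) k with ha
  set t : ℝ := ‖k‖ ^ 2 with ht
  have hknn : (0:ℝ) ≤ ‖k‖ := norm_nonneg k
  have hKpos : (0:ℝ) < K := lt_of_lt_of_le one_pos hK
  have hkpos : (0:ℝ) < ‖k‖ := lt_of_le_of_lt (by positivity) hk
  have htpos : 0 < t := by positivity
  have hD1 : ‖q + k‖ ^ 2 + ‖p - k‖ ^ 2 - ‖q‖ ^ 2 - ‖p‖ ^ 2 = 2 * t + 2 * a := by
    rw [norm_add_sq_real, norm_sub_sq_real, ha, inner_sub_left, ht]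
    ring
  have hD2 : ‖q - k‖ ^ 2 + ‖p + k‖ ^ 2 - ‖q‖ ^ 2 - ‖p‖ ^ 2 = 2 * t - 2 * a := by
    rw [norm_add_sq_real, norm_sub_sq_real, ha, inner_sub_left, ht]
    ring
  have haK : |a| ≤ 2 * K * ‖k‖ := by
    refine (abs_real_inner_le_norm _ _).trans ?_
    have : ‖q - p‖ ≤ 2 * K := (norm_sub_le q p).trans (by linarith)
    exact mul_le_mul_of_nonneg_right this hknn
  have hgoal : ‖k‖ ^ 4 = t ^ 2 := by rw [ht]; ring
  rw [hD1, hD2, hgoal]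
  have ht16 : 16 * K ^ 2 < t := by rw [ht]; nlinarith
  have ha2 : a ^ 2 ≤ 4 * K ^ 2 * t := by
    have h1 := sq_abs a
    rw [ht]; nlinarith [sq_nonneg (|a| - 2 * K * ‖k‖), abs_nonneg a]
  have habs : |a| < t / 2 := by
    calc |a| ≤ 2 * K * ‖k‖ := haK
      _ < t / 2 := by rw [ht]; nlinarith
  clear_value a t
  clear ha ht hD1 hD2 haK hgoal hk hp hq
  have h1 : -t/2 < a := by linarith [neg_abs_le a]
  have h2 : a < t/2 := by linarith [le_abs_self a]
  have hDpos1 : 0 < 2 * t + 2 * a := by linarith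
  have hDpos2 : 0 < 2 * t - 2 * a := by linarith
  refine ⟨hDpos1, hDpos2, ?_⟩
  have hden : 0 < t^2 - a^2 := by nlinarith
  have heq : 1 / t - 1 / (2*t + 2*a) - 1 / (2*t - 2*a) = -(a^2) / (t * (t^2 - a^2)) := by
    have e1 : t + a ≠ 0 := by linarith
    have e2 : t - a ≠ 0 := by linarith
    have e3 : t ≠ 0 := ne_of_gt htpos
    have e4 : t * (t^2 - a^2) ≠ 0 := by positivity
    field_simp
    ring
  rw [heq, abs_div, abs_neg, abs_of_nonneg (sq_nonneg a),
    abs_of_pos (by positivity : (0:ℝ) < t * (t^2 - a^2)),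
    div_le_div_iff₀ (by positivity) (by positivity)]
  have h5 : a ^ 2 ≤ t ^ 2 / 4 := by nlinarith
  have h6 : a ^ 2 * t ^ 2 ≤ 4 * K ^ 2 * t * t ^ 2 :=
    mul_le_mul_of_nonneg_right ha2 (sq_nonneg t)
  nlinarith [mul_pos htpos (mul_pos htpos htpos), mul_le_mul_of_nonneg_left h5
    (le_of_lt (mul_pos (by positivity : (0:ℝ) < 16/3 * K^2) htpos))]

def supN (m : Fin 3 → ℤ) : ℕ := Finset.univ.sup fun i => (m i).natAbs

noncomputable def boxZ (n : ℕ) : Finset (Fin 3 → ℤ) :=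
  Fintype.piFinset fun _ => Finset.Icc (-(n : ℤ)) n

lemma mem_boxZ {n : ℕ} {m : Fin 3 → ℤ} : m ∈ boxZ n ↔ supN m ≤ n := by
  have h1 : m ∈ boxZ n ↔ ∀ i, -(n:ℤ) ≤ m i ∧ m i ≤ n := by
    simp [boxZ, Fintype.mem_piFinset]
  have h2 : supN m ≤ n ↔ ∀ i, (m i).natAbs ≤ n := by
    simp [supN, Finset.sup_le_iff]
  rw [h1, h2]
  exact forall_congr' fun i => by omega

lemma card_boxZ (n : ℕ) : (boxZ n).card = (2 * n + 1) ^ 3 := by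
  simp [boxZ, Int.card_Icc]
  congr 1
  omega

lemma lat_apply (m : Fin 3 → ℤ) (i : Fin 3) : lat m i = 2 * π * (m i : ℝ) := rfl

lemma norm_lat_sq (m : Fin 3 → ℤ) : ‖lat m‖ ^ 2 = ∑ i, (2 * π * (m i : ℝ)) ^ 2 := by
  rw [EuclideanSpace.norm_eq, Real.sq_sqrt (by positivity)]
  exact Finset.sum_congr rfl fun i _ => by
    rw [lat_apply, Real.norm_eq_abs, sq_abs]

lemma natAbs_le_supN (m : Fin 3 → ℤ) (i : Fin 3) : (m i).natAbs ≤ supN m :=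
  Finset.le_sup (f := fun j => (m j).natAbs) (Finset.mem_univ i)

lemma norm_lat_lower (m : Fin 3 → ℤ) : 2 * π * (supN m : ℝ) ≤ ‖lat m‖ := by
  obtain ⟨i, -, hi⟩ := Finset.exists_mem_eq_sup Finset.univ
    (⟨0, Finset.mem_univ 0⟩ : Finset.univ.Nonempty) (fun i => (m i).natAbs)
  have hi' : (supN m : ℝ) = |(m i : ℝ)| := by
    rw [supN, hi]
    push_cast [Nat.cast_natAbs]
    rfl
  have h1 : (2 * π * (supN m : ℝ)) ^ 2 ≤ ‖lat m‖ ^ 2 := by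
    rw [norm_lat_sq, hi']
    have : (2 * π * |(m i : ℝ)|) ^ 2 = (2 * π * (m i : ℝ)) ^ 2 := by
      rw [mul_pow, mul_pow, sq_abs]; ring
    rw [this]
    exact Finset.single_le_sum (f := fun j => (2 * π * (m j : ℝ)) ^ 2)
      (fun j _ => sq_nonneg _) (Finset.mem_univ i)
  have h2 : (0:ℝ) ≤ 2 * π * (supN m : ℝ) := by positivity
  nlinarith [norm_nonneg (lat m)]

lemma norm_lat_upper (m : Fin 3 → ℤ) : ‖lat m‖ ≤ 2 * π * Real.sqrt 3 * (supN m : ℝ) := by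
  have hsq : Real.sqrt 3 ^ 2 = 3 := Real.sq_sqrt (by norm_num)
  have h1 : ‖lat m‖ ^ 2 ≤ (2 * π * Real.sqrt 3 * (supN m : ℝ)) ^ 2 := by
    rw [norm_lat_sq]
    have hs : ∀ i : Fin 3, (2 * π * (m i : ℝ)) ^ 2 ≤ (2 * π) ^ 2 * (supN m : ℝ) ^ 2 := by
      intro i
      have h0 : |(m i : ℝ)| ≤ (supN m : ℝ) := by
        have := natAbs_le_supN m i
        calc |(m i : ℝ)| = ((m i).natAbs : ℝ) := by
              push_cast [Nat.cast_natAbs]; rfl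
          _ ≤ (supN m : ℝ) := by exact_mod_cast this
      have habs : (m i : ℝ) ^ 2 ≤ (supN m : ℝ) ^ 2 := by
        nlinarith [abs_nonneg (m i : ℝ), sq_abs (m i : ℝ)]
      nlinarith [sq_nonneg π]
    calc ∑ i, (2 * π * (m i : ℝ)) ^ 2 ≤ ∑ _i : Fin 3, (2 * π) ^ 2 * (supN m : ℝ) ^ 2 :=
          Finset.sum_le_sum fun i _ => hs i
      _ = 3 * ((2 * π) ^ 2 * (supN m : ℝ) ^ 2) := by
          rw [Finset.sum_const, Finset.card_univ]; simp
      _ = (2 * π * Real.sqrt 3 * (supN m : ℝ)) ^ 2 := by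
          rw [mul_pow, mul_pow, mul_pow, hsq]; ring
  have h2 : (0:ℝ) ≤ 2 * π * Real.sqrt 3 * (supN m : ℝ) := by positivity
  nlinarith [norm_nonneg (lat m)]

lemma shell_sum_le (H : ℕ → ℝ) (hH : ∀ n, 0 ≤ H n) (h0 : H 0 = 0) (M : ℕ) :
    ∑ m ∈ boxZ M, H (supN m) ≤ ∑ n ∈ Finset.Icc 1 M, (26 * (n : ℝ) ^ 2) * H n := by
  induction M with
  | zero =>
    have h1 : ∑ m ∈ boxZ 0, H (supN m) = 0 :=
      Finset.sum_eq_zero fun m hm => by rw [Nat.le_zero.mp (mem_boxZ.mp hm), h0]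
    rw [h1, Finset.Icc_eq_empty (by omega), Finset.sum_empty]
  | succ M ih =>
    have hsub : boxZ M ⊆ boxZ (M + 1) := fun m hm =>
      mem_boxZ.mpr (le_trans (mem_boxZ.mp hm) (Nat.le_succ M))
    rw [← Finset.sum_sdiff hsub, Finset.sum_Icc_succ_top (by omega : 1 ≤ M + 1)]
    have hshell : ∑ m ∈ boxZ (M + 1) \ boxZ M, H (supN m)
        = ((boxZ (M + 1) \ boxZ M).card : ℝ) * H (M + 1) := by
      rw [Finset.sum_congr rfl (fun m hm => ?_), Finset.sum_const, nsmul_eq_mul]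
      obtain ⟨h1, h2⟩ := Finset.mem_sdiff.mp hm
      have h3 := mem_boxZ.mp h1
      have h4 : ¬ supN m ≤ M := fun h => h2 (mem_boxZ.mpr h)
      congr 1
      omega
    have hcard : (((boxZ (M + 1) \ boxZ M).card : ℝ)) ≤ 26 * ((M : ℝ) + 1) ^ 2 := by
      have hle : (2 * M + 1) ^ 3 ≤ (2 * (M + 1) + 1) ^ 3 := Nat.pow_le_pow_left (by omega) 3
      rw [Finset.card_sdiff_of_subset hsub, card_boxZ, card_boxZ, Nat.cast_sub hle]
      push_cast
      nlinarith [sq_nonneg ((M:ℝ)), Nat.cast_nonneg (α := ℝ) M]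
    have hHn := hH (M + 1)
    have hC : ((boxZ (M + 1) \ boxZ M).card : ℝ) * H (M + 1)
        ≤ 26 * ((M : ℝ) + 1) ^ 2 * H (M + 1) := mul_le_mul_of_nonneg_right hcard hHn
    push_cast
    push_cast at ih hC hshell
    linarith

lemma tailTerm_nonneg (p q : EuclideanSpace ℝ (Fin 3)) (K : ℝ) (m : Fin 3 → ℤ) :
    0 ≤ tailTerm p q K m := by
  unfold tailTerm
  split
  · exact abs_nonneg _
  · exact le_refl 0

lemma sqrt3_le_two : Real.sqrt 3 ≤ 2 := by
  nlinarith [Real.sq_sqrt (by norm_num : (0:ℝ) ≤ 3), Real.sqrt_nonneg 3]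

lemma part1_sum (K : ℝ) (hK : 1 ≤ K) (p q : EuclideanSpace ℝ (Fin 3))
    (hp : ‖p‖ ≤ K) (hq : ‖q‖ ≤ K) (S : Finset (Fin 3 → ℤ)) :
    ∑ m ∈ S, tailTerm p q K m ≤ 100 * K := by
  have hKpos : (0:ℝ) < K := lt_of_lt_of_le one_pos hK
  have hπ : (3:ℝ) < π := Real.pi_gt_three
  have hπ4 : π ≤ 4 := Real.pi_le_four
  have hs3 : (0:ℝ) < Real.sqrt 3 := Real.sqrt_pos.mpr (by norm_num)
  have hpi2 : (9:ℝ) ≤ π^2 := by nlinarith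
  have hpi4 : (81:ℝ) ≤ π^4 := by nlinarith
  set H : ℕ → ℝ := fun n =>
    if 4*K < 2*π*Real.sqrt 3*(n:ℝ) then (16/3)*K^2/(2*π*(n:ℝ))^4 else 0 with hHdef
  have hHnn : ∀ n, 0 ≤ H n := by
    intro n
    rw [hHdef]
    dsimp only
    split
    · positivity
    · exact le_refl 0
  have hH0 : H 0 = 0 := by
    rw [hHdef]
    dsimp only
    rw [if_neg]
    push_cast
    rw [mul_zero]
    linarith
  have hpoint : ∀ m, tailTerm p q K m ≤ H (supN m) := by
    intro m
    unfold tailTerm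
    split_ifs with h
    · obtain ⟨-, -, hcore⟩ := core_est K hK p q (lat m) hp hq h
      have hup : 4*K < 2*π*Real.sqrt 3*(supN m : ℝ) := lt_of_lt_of_le h (norm_lat_upper m)
      rw [hHdef]
      dsimp only
      rw [if_pos hup]
      refine hcore.trans ?_
      have hn1 : (0:ℝ) < (supN m : ℝ) := by
        rcases Nat.eq_zero_or_pos (supN m) with h0 | h0
        · rw [h0] at hup; push_cast at hup; rw [mul_zero] at hup; linarith
        · exact_mod_cast h0
      have hlo := norm_lat_lower m
      have hlo4 : (2 * π * (supN m : ℝ)) ^ 4 ≤ ‖lat m‖ ^ 4 :=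
        pow_le_pow_left₀ (by positivity) hlo 4
      exact div_le_div_of_nonneg_left (by positivity) (by positivity) hlo4
    · exact hHnn _
  set M : ℕ := S.sup supN with hM
  have hSsub : S ⊆ boxZ M := fun m hm => mem_boxZ.mpr (Finset.le_sup (f := supN) hm)
  have step1 : ∑ m ∈ S, tailTerm p q K m ≤ ∑ m ∈ boxZ M, H (supN m) :=
    (Finset.sum_le_sum fun m _ => hpoint m).trans
      (Finset.sum_le_sum_of_subset_of_nonneg hSsub fun m _ _ => hHnn _)
  have step2 := shell_sum_le H hHnn hH0 M
  set r : ℝ := 4*K/(2*π*Real.sqrt 3) with hr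
  have hrpos : 0 < r := by positivity
  set n₀ : ℕ := ⌊r⌋₊ with hn₀
  have step3 : ∀ n ∈ Finset.Icc 1 M, (26 * (n:ℝ)^2) * H n
      ≤ K^2 * (if n₀ < n then ((n:ℝ)^2)⁻¹ else 0) := by
    intro n hn
    have hn1 : 1 ≤ n := (Finset.mem_Icc.mp hn).1
    have hnR : (1:ℝ) ≤ (n:ℝ) := by exact_mod_cast hn1
    rw [hHdef]
    dsimp only
    split_ifs with hc h2 h3
    · -- both conditions hold: the main estimate
      have heq : 26*(n:ℝ)^2 * ((16/3)*K^2/(2*π*(n:ℝ))^4)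
          = (416/3)*K^2/(16*π^4*(n:ℝ)^2) := by
        field_simp
        ring
      rw [heq, div_le_iff₀ (by positivity)]
      have hthis : K^2 * ((n:ℝ)^2)⁻¹ * (16*π^4*(n:ℝ)^2) = 16*π^4*K^2 := by
        field_simp
      rw [hthis]
      nlinarith [sq_nonneg K]
    · -- hc true but n₀ ≥ n : impossible
      exfalso
      have hrn : r < (n:ℝ) := by
        rw [hr, div_lt_iff₀ (by positivity)]
        linarith [hc]
      have h1 : (n₀:ℝ) ≤ r := Nat.floor_le hrpos.le
      exact h2 (by exact_mod_cast lt_of_le_of_lt h1 hrn)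
    · have : (0:ℝ) ≤ K^2 * ((n:ℝ)^2)⁻¹ := by positivity
      linarith
    · simp
  have step4 : ∑ n ∈ Finset.Icc 1 M, K^2 * (if n₀ < n then ((n:ℝ)^2)⁻¹ else 0)
      ≤ K^2 * (2 / ((n₀:ℝ) + 1)) := by
    rw [← Finset.mul_sum]
    refine mul_le_mul_of_nonneg_left ?_ (sq_nonneg K)
    rw [← Finset.sum_filter]
    refine le_trans (Finset.sum_le_sum_of_subset_of_nonneg ?_ fun i _ _ => by positivity)
      (sum_Ioo_inv_sq_le (α := ℝ) n₀ (M+2))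
    intro i hi
    simp only [Finset.mem_filter, Finset.mem_Icc] at hi
    simp only [Finset.mem_Ioo]
    omega
  have step5 : K^2 * (2 / ((n₀:ℝ) + 1)) ≤ 100 * K := by
    have hfl1 : r < (n₀:ℝ) + 1 := Nat.lt_floor_add_one r
    have h1 : 2 / ((n₀:ℝ) + 1) ≤ 2 / r :=
      div_le_div_of_nonneg_left (by norm_num) hrpos hfl1.le
    have h2 : K^2 * (2 / ((n₀:ℝ) + 1)) ≤ K^2 * (2 / r) :=
      mul_le_mul_of_nonneg_left h1 (sq_nonneg K)
    have h3 : K^2 * (2 / r) = π * Real.sqrt 3 * K := by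
      rw [hr]
      field_simp
      ring
    rw [h3] at h2
    refine h2.trans ?_
    have h8 : π * Real.sqrt 3 ≤ 8 := by nlinarith [sqrt3_le_two, Real.sqrt_nonneg 3]
    nlinarith [h8, hKpos]
  calc ∑ m ∈ S, tailTerm p q K m ≤ ∑ m ∈ boxZ M, H (supN m) := step1
    _ ≤ ∑ n ∈ Finset.Icc 1 M, (26 * (n:ℝ)^2) * H n := step2
    _ ≤ ∑ n ∈ Finset.Icc 1 M, K^2 * (if n₀ < n then ((n:ℝ)^2)⁻¹ else 0) :=
        Finset.sum_le_sum step3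
    _ ≤ K^2 * (2 / ((n₀:ℝ) + 1)) := step4
    _ ≤ 100 * K := step5

lemma part1 (K : ℝ) (hK : 1 ≤ K) (p q : EuclideanSpace ℝ (Fin 3))
    (hp : ‖p‖ ≤ K) (hq : ‖q‖ ≤ K) :
    Summable (tailTerm p q K) ∧ (∑' k, tailTerm p q K k) ≤ 100 * K := by
  have hs : Summable (tailTerm p q K) :=
    summable_of_sum_le (Pi.le_def.mpr fun m => tailTerm_nonneg p q K m)
      (part1_sum K hK p q hp hq)
  exact ⟨hs, Summable.tsum_le_of_sum_le hs (part1_sum K hK p q hp hq)⟩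

lemma card_bound (K : ℝ) (hK : 1 ≤ K) (B : Set (Fin 3 → ℤ))
    (hB : ∀ m ∈ B, ‖lat m‖ ≤ K) :
    ∃ _ : Fintype B, (Fintype.card B : ℝ) ≤ (2*K)^3 := by
  have hπ : (3:ℝ) < π := Real.pi_gt_three
  have hKpos : (0:ℝ) < K := lt_of_lt_of_le one_pos hK
  set M₁ : ℕ := ⌊K/(2*π)⌋₊ with hM₁
  have hsub : B ⊆ ↑(boxZ M₁) := by
    intro m hm
    have h1 : 2 * π * (supN m : ℝ) ≤ K := (norm_lat_lower m).trans (hB m hm)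
    have h2 : (supN m : ℝ) ≤ K / (2*π) := by
      rw [le_div_iff₀ (by positivity)]
      linarith
    exact Finset.mem_coe.mpr (mem_boxZ.mpr (Nat.le_floor h2))
  have hfin : B.Finite := Set.Finite.subset (boxZ M₁).finite_toSet hsub
  haveI := hfin.fintype
  refine ⟨inferInstance, ?_⟩
  have hc1 : B.toFinset ⊆ boxZ M₁ := fun m hm => hsub (Set.mem_toFinset.mp hm)
  have hc2 : Fintype.card B ≤ (2 * M₁ + 1)^3 := by
    rw [← Set.toFinset_card, ← card_boxZ]
    exact Finset.card_le_card hc1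
  have hMle : 2 * π * (M₁:ℝ) ≤ K := by
    have := Nat.floor_le (by positivity : (0:ℝ) ≤ K/(2*π))
    rw [← hM₁] at this
    have h' := (le_div_iff₀ (by positivity : (0:ℝ) < 2*π)).mp this
    linarith
  have h3 : (2*(M₁:ℝ)+1) ≤ 2*K := by
    nlinarith [Nat.cast_nonneg (α := ℝ) M₁]
  calc (Fintype.card B : ℝ) ≤ ((2*M₁+1 : ℕ) : ℝ)^3 := by exact_mod_cast hc2
    _ = (2*(M₁:ℝ)+1)^3 := by push_cast; ring
    _ ≤ (2*K)^3 := pow_le_pow_left₀ (by positivity) h3 3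

end HighMomentum

theorem high_momentum_tail_estimate :
    ∃ C : ℝ, 0 < C ∧ ∀ K : ℝ, 1 ≤ K →
      (∀ p q : EuclideanSpace ℝ (Fin 3), ‖p‖ ≤ K → ‖q‖ ≤ K →
        (∀ k : Fin 3 → ℤ, 4 * K < ‖lat k‖ →
          0 < ‖q + lat k‖ ^ 2 + ‖p - lat k‖ ^ 2 - ‖q‖ ^ 2 - ‖p‖ ^ 2 ∧
            0 < ‖q - lat k‖ ^ 2 + ‖p + lat k‖ ^ 2 - ‖q‖ ^ 2 - ‖p‖ ^ 2) ∧
        Summable (tailTerm p q K) ∧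
        (∑' k : Fin 3 → ℤ, tailTerm p q K k) ≤ C * K) ∧
      (∀ B B' : Set (Fin 3 → ℤ),
        (∀ m ∈ B, ‖lat m‖ ≤ K) → (∀ m ∈ B', ‖lat m‖ ≤ K) →
        (∑' pm : B, ∑' qm : B', ∑' k : Fin 3 → ℤ, tailTerm (lat pm.1) (lat qm.1) K k)
          ≤ C * K ^ 7) := by
  refine ⟨6400, by norm_num, fun K hK => ⟨fun p q hp hq => ?_, fun B B' hB hB' => ?_⟩⟩
  · have hKpos : (0:ℝ) < K := lt_of_lt_of_le one_pos hK
    obtain ⟨hs, ht⟩ := HighMomentum.part1 K hK p q hp hq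
    refine ⟨fun k hk => ?_, hs, ht.trans (by nlinarith)⟩
    obtain ⟨h1, h2, -⟩ := HighMomentum.core_est K hK p q (lat k) hp hq hk
    exact ⟨h1, h2⟩
  · have hKpos : (0:ℝ) < K := lt_of_lt_of_le one_pos hK
    obtain ⟨instB, hcardB⟩ := HighMomentum.card_bound K hK B hB
    obtain ⟨instB', hcardB'⟩ := HighMomentum.card_bound K hK B' hB'
    have hinner : ∀ (pm : B) (qm : B'),
        (∑' k : Fin 3 → ℤ, tailTerm (lat pm.1) (lat qm.1) K k) ≤ 100 * K := fun pm qm =>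
      (HighMomentum.part1 K hK (lat pm.1) (lat qm.1) (hB _ pm.2) (hB' _ qm.2)).2
    have hinner0 : ∀ (pm : B) (qm : B'),
        0 ≤ ∑' k : Fin 3 → ℤ, tailTerm (lat pm.1) (lat qm.1) K k := fun pm qm =>
      tsum_nonneg fun k => HighMomentum.tailTerm_nonneg _ _ _ _
    have hmid : ∀ pm : B,
        (∑' qm : B', ∑' k : Fin 3 → ℤ, tailTerm (lat pm.1) (lat qm.1) K k)
          ≤ (2*K)^3 * (100 * K) := by
      intro pm
      rw [tsum_fintype]
      calc ∑ qm : B', ∑' k : Fin 3 → ℤ, tailTerm (lat pm.1) (lat qm.1) K k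
          ≤ (Fintype.card B') • (100 * K) := by
            rw [← Finset.card_univ]
            exact Finset.sum_le_card_nsmul _ _ _ fun qm _ => hinner pm qm
        _ = (Fintype.card B' : ℝ) * (100 * K) := nsmul_eq_mul _ _
        _ ≤ (2*K)^3 * (100 * K) := by
            have : (0:ℝ) ≤ 100 * K := by positivity
            exact mul_le_mul_of_nonneg_right hcardB' this
    have hmid0 : ∀ pm : B,
        0 ≤ ∑' qm : B', ∑' k : Fin 3 → ℤ, tailTerm (lat pm.1) (lat qm.1) K k := fun pm =>
      tsum_nonneg fun qm => hinner0 pm qm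
    rw [tsum_fintype]
    calc ∑ pm : B, ∑' qm : B', ∑' k : Fin 3 → ℤ, tailTerm (lat pm.1) (lat qm.1) K k
        ≤ (Fintype.card B) • ((2*K)^3 * (100 * K)) := by
          rw [← Finset.card_univ]
          exact Finset.sum_le_card_nsmul _ _ _ fun pm _ => hmid pm
      _ = (Fintype.card B : ℝ) * ((2*K)^3 * (100 * K)) := nsmul_eq_mul _ _
      _ ≤ (2*K)^3 * ((2*K)^3 * (100 * K)) := by
          have : (0:ℝ) ≤ (2*K)^3 * (100 * K) := by positivity
          exact mul_le_mul_of_nonneg_right hcardB this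
      _ = 6400 * K ^ 7 := by ring
end

section
/- Assume the lattice-point counting estimate: for every ε > 0 there is C_ε such that | #{x ∈ ℤ³ : |x|² ≤ R} − (4/3)π R^{3/2} | ≤ C_ε R^{21/32+ε} for all R ≥ 1. Then for every ε > 0 there exist C′_ε and N₀ such that: whenever N_σ ≥ N₀ and k_F > 0 satisfy #{k ∈ 2πℤ³ : |k| ≤ k_F} = N_σ and there exists k ∈ 2πℤ³ with |k| = k_F (i.e. k_F is exactly attained), then | k_F − (6π²)^{1/3} N_σ^{1/3} | ≤ C′_ε N_σ^{−11/48+ε}. -/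
set_option maxHeartbeats 800000 in
lemma norm_lat (m : Fin 3 → ℤ) :
    ‖lat m‖ = 2 * Real.pi * Real.sqrt (∑ i, ((m i : ℝ)) ^ 2) := by
  have h : ∀ i, (lat m) i = 2 * Real.pi * (m i : ℝ) := fun i => rfl
  rw [EuclideanSpace.norm_eq]
  have h2 : ∑ i, ‖lat m i‖ ^ 2 = (2 * Real.pi) ^ 2 * ∑ i, ((m i : ℝ)) ^ 2 := by
    simp only [h, Real.norm_eq_abs, Finset.mul_sum]
    congr 1; ext i
    ring_nf
    rw [sq_abs]
    ring
  rw [h2, Real.sqrt_mul (by positivity), Real.sqrt_sq (by positivity)]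

set_option maxHeartbeats 800000 in
theorem fermi_momentum_asymptotics
    (hyp : ∀ ε : ℝ, 0 < ε → ∃ C : ℝ, 0 < C ∧ ∀ R : ℝ, 1 ≤ R →
      |(Set.ncard {x : Fin 3 → ℤ | (∑ i, ((x i : ℝ)) ^ 2) ≤ R} : ℝ)
          - 4 / 3 * Real.pi * R ^ ((3 : ℝ) / 2)|
        ≤ C * R ^ ((21 : ℝ) / 32 + ε)) :
    ∀ ε : ℝ, 0 < ε → ∃ C' : ℝ, 0 < C' ∧ ∃ N₀ : ℕ, ∀ Nσ : ℕ, N₀ ≤ Nσ →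
      ∀ kF : ℝ, 0 < kF →
        Set.ncard {m : Fin 3 → ℤ | ‖lat m‖ ≤ kF} = Nσ →
        (∃ m : Fin 3 → ℤ, ‖lat m‖ = kF) →
        |kF - (6 * Real.pi ^ 2) ^ ((1 : ℝ) / 3) * (Nσ : ℝ) ^ ((1 : ℝ) / 3)|
          ≤ C' * (Nσ : ℝ) ^ (-(11 : ℝ) / 48 + ε) := by
  intro ε hε
  set ε₀ : ℝ := min ε (1/4) with hε₀def
  have hε₀ : 0 < ε₀ := lt_min hε (by norm_num)
  have hε₀ε : ε₀ ≤ ε := min_le_left _ _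
  have hε₀4 : ε₀ ≤ 1/4 := min_le_right _ _
  obtain ⟨C, hC, hbound⟩ := hyp ε₀ hε₀
  set C₁ : ℝ := 4 / 3 * Real.pi + C with hC₁def
  have hC₁ : 1 ≤ C₁ := by
    have := Real.pi_gt_three
    simp only [hC₁def]; nlinarith
  have hC₁0 : 0 < C₁ := by linarith
  refine ⟨3 * C / 2 * C₁ ^ ((11:ℝ)/48), by positivity, 1, ?_⟩
  intro Nσ hN kF hkF hcard hex
  obtain ⟨m₀, hm₀⟩ := hex
  have hπ : (0:ℝ) < Real.pi := Real.pi_pos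
  set R : ℝ := (kF / (2 * Real.pi)) ^ 2 with hRdef
  have hR0 : (0:ℝ) ≤ R := sq_nonneg _
  -- set identification
  have hset : {m : Fin 3 → ℤ | ‖lat m‖ ≤ kF}
      = {x : Fin 3 → ℤ | (∑ i, ((x i : ℝ)) ^ 2) ≤ R} := by
    ext x
    simp only [Set.mem_setOf_eq, norm_lat]
    rw [mul_comm, ← le_div_iff₀ (by positivity : (0:ℝ) < 2 * Real.pi),
      Real.sqrt_le_left (by positivity : (0:ℝ) ≤ kF / (2 * Real.pi))]
  have hcard' : (Set.ncard {x : Fin 3 → ℤ | (∑ i, ((x i : ℝ)) ^ 2) ≤ R} : ℝ) = Nσ := by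
    rw [← hset, hcard]
  -- R = sum of squares of m₀, hence ≥ 1
  have hm₀' : kF / (2 * Real.pi) = Real.sqrt (∑ i, ((m₀ i : ℝ)) ^ 2) := by
    rw [norm_lat] at hm₀
    rw [← hm₀, mul_comm, mul_div_assoc, div_self (by positivity : (2 * Real.pi) ≠ 0), mul_one]
  have hRS : R = ∑ i, ((m₀ i : ℝ)) ^ 2 := by
    rw [hRdef, hm₀', Real.sq_sqrt (by positivity)]
  have hR1 : (1:ℝ) ≤ R := by
    have hpos : (0:ℝ) < R := by
      rw [hRdef]; positivity
    have : (0:ℤ) < ∑ i, (m₀ i) ^ 2 := by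
      have := hRS ▸ hpos
      exact_mod_cast (by push_cast at this ⊢; exact this : (0:ℝ) < ((∑ i, (m₀ i)^2 : ℤ) : ℝ))
    have h1 : (1:ℤ) ≤ ∑ i, (m₀ i) ^ 2 := this
    rw [hRS]
    calc (1:ℝ) ≤ ((∑ i, (m₀ i)^2 : ℤ) : ℝ) := by exact_mod_cast h1
      _ = ∑ i, ((m₀ i : ℝ)) ^ 2 := by push_cast; ring
  have hb := hbound R hR1
  rw [hcard'] at hb
  -- s = sqrt R, kF = 2π s
  set s : ℝ := Real.sqrt R with hsdef
  have hs : s = kF / (2 * Real.pi) := by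
    rw [hsdef, hRdef, Real.sqrt_sq (by positivity)]
  have hkFs : kF = 2 * Real.pi * s := by rw [hs]; field_simp
  have hs0 : 0 < s := by rw [hs]; positivity
  have hsR : s ^ 2 = R := Real.sq_sqrt hR0
  have hR32 : R ^ ((3:ℝ)/2) = s ^ 3 := by
    rw [show (3:ℝ)/2 = (1/2) * 3 by norm_num, Real.rpow_mul hR0, ← Real.sqrt_eq_rpow]
    rw [show ((3:ℝ)) = ((3:ℕ):ℝ) by norm_num, Real.rpow_natCast]
  set B : ℝ := (6 * Real.pi ^ 2) ^ ((1:ℝ)/3) * (Nσ : ℝ) ^ ((1:ℝ)/3) with hBdef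
  have hB0 : 0 ≤ B := by positivity
  have hB3 : B ^ 3 = 6 * Real.pi ^ 2 * (Nσ : ℝ) := by
    rw [hBdef, mul_pow, ← Real.rpow_natCast ((6 * Real.pi ^ 2) ^ ((1:ℝ)/3)) 3,
      ← Real.rpow_natCast ((Nσ:ℝ) ^ ((1:ℝ)/3)) 3,
      ← Real.rpow_mul (by positivity), ← Real.rpow_mul (Nat.cast_nonneg _)]
    norm_num
  -- cube difference bound
  have hkey : |kF - B| * kF ^ 2 ≤ 6 * Real.pi ^ 2 * (C * R ^ ((21:ℝ)/32 + ε₀)) := by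
    have hfac : kF ^ 3 - B ^ 3 = (kF - B) * (kF ^ 2 + kF * B + B ^ 2) := by ring
    have habs : |kF ^ 3 - B ^ 3| = |kF - B| * (kF ^ 2 + kF * B + B ^ 2) := by
      rw [hfac, abs_mul,
        abs_of_nonneg (show (0:ℝ) ≤ kF ^ 2 + kF * B + B ^ 2 by positivity)]
    have h1 : |kF - B| * kF ^ 2 ≤ |kF ^ 3 - B ^ 3| := by
      rw [habs]
      have : kF ^ 2 ≤ kF ^ 2 + kF * B + B ^ 2 := by nlinarith [mul_nonneg hkF.le hB0, sq_nonneg B]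
      exact mul_le_mul_of_nonneg_left this (abs_nonneg _)
    have h2 : |kF ^ 3 - B ^ 3| ≤ 6 * Real.pi ^ 2 * (C * R ^ ((21:ℝ)/32 + ε₀)) := by
      have hkF3 : kF ^ 3 = 6 * Real.pi ^ 2 * (4 / 3 * Real.pi * R ^ ((3:ℝ)/2)) := by
        rw [hkFs, hR32]; ring
      rw [hkF3, hB3, show 6 * Real.pi ^ 2 * (4 / 3 * Real.pi * R ^ ((3:ℝ)/2))
          - 6 * Real.pi ^ 2 * (Nσ:ℝ)
          = -(6 * Real.pi ^ 2 * ((Nσ:ℝ) - 4 / 3 * Real.pi * R ^ ((3:ℝ)/2))) by ring,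
        abs_neg, abs_mul, abs_of_nonneg (by positivity : (0:ℝ) ≤ 6 * Real.pi ^ 2)]
      exact mul_le_mul_of_nonneg_left hb (by positivity)
    exact h1.trans h2
  have hkF2 : kF ^ 2 = 4 * Real.pi ^ 2 * R := by
    rw [hkFs, ← hsR]; ring
  -- |kF - B| ≤ (3C/2) R^{-a},  a := 11/32 - ε₀
  set a : ℝ := 11/32 - ε₀ with hadef
  have hstep : |kF - B| ≤ 3 * C / 2 * R ^ (-a) := by
    have hRpos : (0:ℝ) < R := by linarith
    have hdiv : |kF - B| ≤ 6 * Real.pi ^ 2 * (C * R ^ ((21:ℝ)/32 + ε₀)) / kF ^ 2 := by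
      rw [le_div_iff₀ (by positivity : (0:ℝ) < kF ^ 2)]
      exact hkey
    have heq : 6 * Real.pi ^ 2 * (C * R ^ ((21:ℝ)/32 + ε₀)) / kF ^ 2
        = 3 * C / 2 * R ^ (-a) := by
      rw [hkF2, show (21:ℝ)/32 + ε₀ = -a + 1 by rw [hadef]; ring,
        Real.rpow_add hRpos, Real.rpow_one]
      field_simp
      ring
    rw [← heq]; exact hdiv
  -- N ≤ C₁ R^{3/2}
  have hNle : (Nσ : ℝ) ≤ C₁ * R ^ ((3:ℝ)/2) := by
    have h21 : R ^ ((21:ℝ)/32 + ε₀) ≤ R ^ ((3:ℝ)/2) :=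
      Real.rpow_le_rpow_of_exponent_le hR1 (by linarith)
    have := abs_le.mp hb
    calc (Nσ : ℝ) ≤ 4 / 3 * Real.pi * R ^ ((3:ℝ)/2) + C * R ^ ((21:ℝ)/32 + ε₀) := by
          linarith [this.2]
      _ ≤ 4 / 3 * Real.pi * R ^ ((3:ℝ)/2) + C * R ^ ((3:ℝ)/2) :=
          by nlinarith [Real.rpow_nonneg hR0 ((3:ℝ)/2)]
      _ = C₁ * R ^ ((3:ℝ)/2) := by rw [hC₁def]; ring
  have hN1 : (1:ℝ) ≤ (Nσ : ℝ) := by exact_mod_cast hN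
  have hNC₁pos : (0:ℝ) < (Nσ:ℝ) / C₁ := by positivity
  -- (N/C₁)^{2/3} ≤ R
  have hbase : ((Nσ:ℝ) / C₁) ^ ((2:ℝ)/3) ≤ R := by
    have h1 : (Nσ:ℝ) / C₁ ≤ R ^ ((3:ℝ)/2) := by
      rw [div_le_iff₀ hC₁0]; linarith [hNle]
    calc ((Nσ:ℝ) / C₁) ^ ((2:ℝ)/3) ≤ (R ^ ((3:ℝ)/2)) ^ ((2:ℝ)/3) :=
          Real.rpow_le_rpow hNC₁pos.le h1 (by norm_num)
      _ = R := by rw [← Real.rpow_mul hR0]; norm_num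
  have ha0 : 0 < a := by rw [hadef]; linarith
  have hRa : R ^ (-a) ≤ ((Nσ:ℝ) / C₁) ^ ((2:ℝ)/3 * (-a)) := by
    have := Real.rpow_le_rpow_of_nonpos (Real.rpow_pos_of_pos hNC₁pos ((2:ℝ)/3)) hbase
      (by linarith : -a ≤ 0)
    rwa [← Real.rpow_mul hNC₁pos.le] at this
  have hsplit : ((Nσ:ℝ) / C₁) ^ ((2:ℝ)/3 * (-a))
      = (Nσ:ℝ) ^ ((2:ℝ)/3 * (-a)) * C₁ ^ ((2:ℝ)/3 * a) := by
    rw [Real.div_rpow (Nat.cast_nonneg _) hC₁0.le, div_eq_mul_inv,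
      ← Real.rpow_neg hC₁0.le, show -((2:ℝ)/3 * (-a)) = (2:ℝ)/3 * a by ring]
  have hfinal : ((Nσ:ℝ) / C₁) ^ ((2:ℝ)/3 * (-a))
      ≤ C₁ ^ ((11:ℝ)/48) * (Nσ:ℝ) ^ (-(11:ℝ)/48 + ε) := by
    rw [hsplit]
    have h1 : C₁ ^ ((2:ℝ)/3 * a) ≤ C₁ ^ ((11:ℝ)/48) :=
      Real.rpow_le_rpow_of_exponent_le hC₁ (by rw [hadef]; linarith)
    have h2 : (Nσ:ℝ) ^ ((2:ℝ)/3 * (-a)) ≤ (Nσ:ℝ) ^ (-(11:ℝ)/48 + ε) :=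
      Real.rpow_le_rpow_of_exponent_le hN1 (by rw [hadef]; linarith)
    calc (Nσ:ℝ) ^ ((2:ℝ)/3 * (-a)) * C₁ ^ ((2:ℝ)/3 * a)
        ≤ (Nσ:ℝ) ^ (-(11:ℝ)/48 + ε) * C₁ ^ ((11:ℝ)/48) := by
          apply mul_le_mul h2 h1 (by positivity) (by positivity)
      _ = C₁ ^ ((11:ℝ)/48) * (Nσ:ℝ) ^ (-(11:ℝ)/48 + ε) := by ring
  calc |kF - B| ≤ 3 * C / 2 * R ^ (-a) := hstep
    _ ≤ 3 * C / 2 * (C₁ ^ ((11:ℝ)/48) * (Nσ:ℝ) ^ (-(11:ℝ)/48 + ε)) := by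
        apply mul_le_mul_of_nonneg_left (hRa.trans hfinal) (by positivity)
    _ = 3 * C / 2 * C₁ ^ ((11:ℝ)/48) * (Nσ:ℝ) ^ (-(11:ℝ)/48 + ε) := by ring
end

section
/- There is a universal constant C′ such that: for all a > 0, all ℓ ∈ (0, 1/2], all C₁ > 0, and any family (W_p)_{p∈2πℤ³} of complex numbers satisfying |W_p| ≤ C₁·a for all p and |W_p| ≤ C₁·a·ℓ^{−2}·|p|^{−2} for all p ≠ 0, one has Σ_{p ∈ 2πℤ³, p≠0} |W_p|·|p|^{−2} ≤ C′·C₁·a·ℓ^{−1}. -/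
/-- The sup-norm of a lattice point, as a natural number. -/
def latK (p : Fin 3 → ℤ) : ℕ := Finset.univ.sup fun i => (p i).natAbs

lemma latK_pos {p : Fin 3 → ℤ} (hp : p ≠ 0) : 1 ≤ latK p := by
  rcases Nat.eq_zero_or_pos (latK p) with h | h
  · exfalso
    apply hp
    funext i
    have hi : (p i).natAbs ≤ latK p := by
      rw [latK]; exact Finset.le_sup (f := fun i => (p i).natAbs) (Finset.mem_univ i)
    rw [h] at hi
    simpa [Int.natAbs_eq_zero] using Nat.le_zero.mp hi
  · exact h

lemma norm_lat_ge (p : Fin 3 → ℤ) : 2 * Real.pi * latK p ≤ ‖lat p‖ := by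
  obtain ⟨j, -, hj⟩ := Finset.exists_mem_eq_sup Finset.univ ⟨0, Finset.mem_univ 0⟩
    fun i => (p i).natAbs
  have hcoord : (lat p) j = 2 * Real.pi * (p j : ℝ) := rfl
  have hnorm : ‖lat p‖ = Real.sqrt (∑ i, ‖(lat p) i‖ ^ 2) := EuclideanSpace.norm_eq _
  have hterm : (2 * Real.pi * (latK p : ℝ)) ^ 2 ≤ ∑ i, ‖(lat p) i‖ ^ 2 := by
    have h1 : (2 * Real.pi * (latK p : ℝ)) ^ 2 = ‖(lat p) j‖ ^ 2 := by
      rw [hcoord, Real.norm_eq_abs]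
      have h2 : (latK p : ℝ) = |(p j : ℝ)| := by
        rw [latK, hj]
        rw [Nat.cast_natAbs, Int.cast_abs]
      rw [h2, abs_mul, abs_of_nonneg (by positivity : (0:ℝ) ≤ 2 * Real.pi)]
    rw [h1]
    exact Finset.single_le_sum (f := fun i => ‖(lat p) i‖ ^ 2)
      (fun i _ => sq_nonneg _) (Finset.mem_univ j)
  rw [hnorm]
  calc 2 * Real.pi * (latK p : ℝ)
      = Real.sqrt ((2 * Real.pi * (latK p : ℝ)) ^ 2) := (Real.sqrt_sq (by positivity)).symm
    _ ≤ Real.sqrt (∑ i, ‖(lat p) i‖ ^ 2) := Real.sqrt_le_sqrt hterm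

/-- The box `{p : ∀ i, |p i| ≤ n}` as a finset. -/
noncomputable def boxF (n : ℕ) : Finset (Fin 3 → ℤ) :=
  Fintype.piFinset fun _ => Finset.Icc (-(n : ℤ)) n

lemma mem_boxF {n : ℕ} {p : Fin 3 → ℤ} : p ∈ boxF n ↔ latK p ≤ n := by
  rw [boxF, Fintype.mem_piFinset, latK, Finset.sup_le_iff]
  constructor
  · intro h i _
    have := h i
    rw [Finset.mem_Icc] at this
    omega
  · intro h i
    have := h i (Finset.mem_univ i)
    rw [Finset.mem_Icc]
    omega

lemma card_boxF (n : ℕ) : (boxF n).card = (2 * n + 1) ^ 3 := by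
  rw [boxF, Fintype.card_piFinset]
  simp only [Int.card_Icc]
  have h : ((n : ℤ) + 1 - -(n : ℤ)).toNat = 2 * n + 1 := by omega
  rw [h, Finset.prod_const, Finset.card_univ, Fintype.card_fin]

lemma card_shell_le (s : Finset (Fin 3 → ℤ)) {k : ℕ} (hk : 1 ≤ k) :
    (s.filter fun p => latK p = k).card ≤ 26 * k ^ 2 := by
  have hsub : (s.filter fun p => latK p = k) ⊆ boxF k \ boxF (k - 1) := by
    intro p hp
    rw [Finset.mem_filter] at hp
    rw [Finset.mem_sdiff, mem_boxF, mem_boxF]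
    omega
  have hsubbox : boxF (k - 1) ⊆ boxF k := by
    intro p hp
    rw [mem_boxF] at hp ⊢
    omega
  calc (s.filter fun p => latK p = k).card
      ≤ (boxF k \ boxF (k - 1)).card := Finset.card_le_card hsub
    _ = (boxF k).card - (boxF (k - 1)).card := Finset.card_sdiff_of_subset hsubbox
    _ ≤ 26 * k ^ 2 := by
        rw [card_boxF, card_boxF]
        obtain ⟨m, rfl⟩ : ∃ m, k = m + 1 := ⟨k - 1, by omega⟩
        have h1 : (2 * (m + 1) + 1) ^ 3 = (2 * (m + 1 - 1) + 1) ^ 3 + (24 * m ^ 2 + 48 * m + 26)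
            := by
          simp only [Nat.add_sub_cancel]
          ring
        have h2 : 24 * m ^ 2 + 48 * m + 26 ≤ 26 * (m + 1) ^ 2 := by nlinarith
        omega

set_option maxHeartbeats 2000000 in
theorem W_coefficient_sum_estimate :
    ∃ C' : ℝ, 0 < C' ∧
      ∀ (a ℓ C₁ : ℝ), 0 < a → 0 < ℓ → ℓ ≤ 1 / 2 → 0 < C₁ →
        ∀ W : (Fin 3 → ℤ) → ℂ,
          (∀ p, ‖W p‖ ≤ C₁ * a) →
          (∀ p : Fin 3 → ℤ, p ≠ 0 → ‖W p‖ ≤ C₁ * a / (ℓ ^ 2 * ‖lat p‖ ^ 2)) →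
          (∑' p : Fin 3 → ℤ, if p ≠ 0 then ‖W p‖ / ‖lat p‖ ^ 2 else 0)
            ≤ C' * C₁ * a / ℓ := by
  refine ⟨4, by norm_num, ?_⟩
  intro a ℓ C₁ ha hℓ hℓ2 hC₁ W hW1 hW2
  have hπ : (3 : ℝ) ≤ Real.pi := by
    have := Real.pi_gt_three
    linarith
  have hπ0 : (0 : ℝ) < Real.pi := by linarith
  have hbound : (0:ℝ) ≤ 4 * C₁ * a / ℓ := by positivity
  refine tsum_le_of_sum_le' hbound ?_
  intro s
  -- the cut-off
  set N : ℕ := ⌈ℓ⁻¹⌉₊ with hN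
  have hinv1 : (1:ℝ) ≤ ℓ⁻¹ := by
    rw [le_inv_comm₀ (by norm_num) hℓ]
    linarith
  have hNge : ℓ⁻¹ ≤ (N : ℝ) := Nat.le_ceil _
  have hNle : (N : ℝ) ≤ 2 / ℓ := by
    have h1 := Nat.ceil_lt_add_one (le_of_lt (by positivity : (0:ℝ) < ℓ⁻¹))
    have h2 : ℓ⁻¹ + 1 ≤ 2 / ℓ := by
      rw [div_eq_mul_inv]
      linarith
    linarith [h1]
  -- the majorant
  set g : ℕ → ℝ := fun k =>
    if k ≤ N then C₁ * a / (2 * Real.pi * k) ^ 2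
    else C₁ * a / (ℓ ^ 2 * (2 * Real.pi * k) ^ 4) with hg
  have hg_nonneg : ∀ k, 0 ≤ g k := by
    intro k
    rw [hg]
    dsimp only
    split <;> positivity
  -- pointwise bound
  have hpoint : ∀ p : Fin 3 → ℤ, p ≠ 0 →
      ‖W p‖ / ‖lat p‖ ^ 2 ≤ g (latK p) := by
    intro p hp
    have hk1 : 1 ≤ latK p := latK_pos hp
    have hk1' : (1:ℝ) ≤ (latK p : ℝ) := by exact_mod_cast hk1
    have hkr : 2 * Real.pi * (latK p : ℝ) ≤ ‖lat p‖ := norm_lat_ge p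
    have hkpos : (0:ℝ) < 2 * Real.pi * (latK p : ℝ) := by nlinarith
    have hrpos : (0:ℝ) < ‖lat p‖ := lt_of_lt_of_le hkpos hkr
    have hsq : (2 * Real.pi * (latK p : ℝ)) ^ 2 ≤ ‖lat p‖ ^ 2 :=
      pow_le_pow_left₀ (le_of_lt hkpos) hkr 2
    rw [hg]
    dsimp only
    split
    · exact div_le_div₀ (by positivity) (hW1 p) (by positivity) hsq
    · calc ‖W p‖ / ‖lat p‖ ^ 2
          ≤ (C₁ * a / (ℓ ^ 2 * ‖lat p‖ ^ 2)) / ‖lat p‖ ^ 2 :=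
            div_le_div₀ (by positivity) (hW2 p hp) (by positivity) le_rfl
        _ = C₁ * a / (ℓ ^ 2 * (‖lat p‖ ^ 2 * ‖lat p‖ ^ 2)) := by
            rw [div_div]; ring_nf
        _ ≤ C₁ * a / (ℓ ^ 2 * (2 * Real.pi * (latK p : ℝ)) ^ 4) := by
            apply div_le_div₀ (by positivity) le_rfl (by positivity)
            have h4 : (2 * Real.pi * (latK p : ℝ)) ^ 4
                ≤ ‖lat p‖ ^ 2 * ‖lat p‖ ^ 2 := by nlinarith [hsq, sq_nonneg ‖lat p‖]
            exact mul_le_mul_of_nonneg_left h4 (sq_nonneg ℓ)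
  -- reduce to the nonzero part
  classical
  set s' : Finset (Fin 3 → ℤ) := s.filter (fun p => p ≠ 0) with hs'
  have hstep1 : (∑ p ∈ s, if p ≠ 0 then ‖W p‖ / ‖lat p‖ ^ 2 else 0)
      ≤ ∑ p ∈ s', g (latK p) := by
    rw [hs', Finset.sum_filter]
    apply Finset.sum_le_sum
    intro p _
    split
    · next h => exact hpoint p h
    · next h => simp [h, hg_nonneg]
  -- fiber the sum over shells
  set K : ℕ := s'.sup latK with hK
  set t : Finset ℕ := Finset.Icc 1 K with ht
  have hmaps : ∀ p ∈ s', latK p ∈ t := by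
    intro p hp
    rw [ht, Finset.mem_Icc]
    have hp' := hp
    rw [hs', Finset.mem_filter] at hp'
    exact ⟨latK_pos hp'.2, Finset.le_sup hp⟩
  have hstep2 : (∑ p ∈ s', g (latK p))
      = ∑ k ∈ t, ∑ p ∈ s'.filter (fun p => latK p = k), g k :=
    (Finset.sum_fiberwise_of_maps_to' hmaps g).symm
  have hstep3 : (∑ k ∈ t, ∑ p ∈ s'.filter (fun p => latK p = k), g k)
      ≤ ∑ k ∈ t, (26 * (k:ℝ) ^ 2) * g k := by
    apply Finset.sum_le_sum
    intro k hk
    rw [ht, Finset.mem_Icc] at hk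
    rw [Finset.sum_const, nsmul_eq_mul]
    apply mul_le_mul_of_nonneg_right _ (hg_nonneg k)
    have := card_shell_le s' hk.1
    calc ((s'.filter fun p => latK p = k).card : ℝ) ≤ ((26 * k ^ 2 : ℕ) : ℝ) := by
          exact_mod_cast this
      _ = 26 * (k:ℝ) ^ 2 := by push_cast; ring
  -- split the shell sum at N
  -- part A : small shells
  have hA : (∑ k ∈ t.filter (fun k => k ≤ N), (26 * (k:ℝ) ^ 2) * g k) ≤ 2 * C₁ * a / ℓ := by
    have hA1 : ∀ k ∈ t.filter (fun k => k ≤ N), (26 * (k:ℝ) ^ 2) * g k ≤ C₁ * a := by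
      intro k hk
      rw [Finset.mem_filter, ht, Finset.mem_Icc] at hk
      have hk1 : 1 ≤ k := hk.1.1
      have hk1' : (1:ℝ) ≤ (k:ℝ) := by exact_mod_cast hk1
      have hkne : (k:ℝ) ≠ 0 := by positivity
      rw [hg]
      dsimp only
      rw [if_pos hk.2]
      have heq : (26 * (k:ℝ) ^ 2) * (C₁ * a / (2 * Real.pi * k) ^ 2)
          = 26 / (4 * Real.pi ^ 2) * (C₁ * a) := by
        field_simp
        ring
      rw [heq]
      have h26 : 26 / (4 * Real.pi ^ 2) ≤ (1:ℝ) := by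
        rw [div_le_one (by positivity)]
        nlinarith
      exact mul_le_of_le_one_left (le_of_lt (mul_pos hC₁ ha)) h26
    calc (∑ k ∈ t.filter (fun k => k ≤ N), (26 * (k:ℝ) ^ 2) * g k)
        ≤ ∑ _k ∈ t.filter (fun k => k ≤ N), C₁ * a := Finset.sum_le_sum hA1
      _ = (t.filter (fun k => k ≤ N)).card * (C₁ * a) := by
          rw [Finset.sum_const, nsmul_eq_mul]
      _ ≤ (N : ℝ) * (C₁ * a) := by
          apply mul_le_mul_of_nonneg_right _ (le_of_lt (mul_pos hC₁ ha))
          have hsub : t.filter (fun k => k ≤ N) ⊆ Finset.Icc 1 N := by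
            intro k hk
            rw [Finset.mem_filter, ht, Finset.mem_Icc] at hk
            rw [Finset.mem_Icc]
            exact ⟨hk.1.1, hk.2⟩
          have := Finset.card_le_card hsub
          have hcard : (Finset.Icc 1 N).card = N := by
            rw [Nat.card_Icc]
            omega
          calc ((t.filter (fun k => k ≤ N)).card : ℝ)
              ≤ ((Finset.Icc 1 N).card : ℝ) := by exact_mod_cast this
            _ = (N : ℝ) := by rw [hcard]
      _ ≤ (2 / ℓ) * (C₁ * a) := mul_le_mul_of_nonneg_right hNle (le_of_lt (mul_pos hC₁ ha))
      _ = 2 * C₁ * a / ℓ := by field_simp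
  -- part B : large shells
  have hB : (∑ k ∈ t.filter (fun k => ¬ k ≤ N), (26 * (k:ℝ) ^ 2) * g k) ≤ 2 * C₁ * a / ℓ := by
    have hB1 : ∀ k ∈ t.filter (fun k => ¬ k ≤ N),
        (26 * (k:ℝ) ^ 2) * g k ≤ (C₁ * a / ℓ ^ 2) * ((k:ℝ) ^ 2)⁻¹ := by
      intro k hk
      rw [Finset.mem_filter, ht, Finset.mem_Icc] at hk
      have hk1 : 1 ≤ k := hk.1.1
      have hk1' : (1:ℝ) ≤ (k:ℝ) := by exact_mod_cast hk1
      have hkne : (k:ℝ) ≠ 0 := by positivity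
      rw [hg]
      dsimp only
      rw [if_neg hk.2]
      have heq : (26 * (k:ℝ) ^ 2) * (C₁ * a / (ℓ ^ 2 * (2 * Real.pi * k) ^ 4))
          = 26 / (16 * Real.pi ^ 4) * ((C₁ * a / ℓ ^ 2) * ((k:ℝ) ^ 2)⁻¹) := by
        field_simp
        ring
      rw [heq]
      have h26 : 26 / (16 * Real.pi ^ 4) ≤ (1:ℝ) := by
        rw [div_le_one (by positivity)]
        have h9 : (9:ℝ) ≤ Real.pi ^ 2 := by nlinarith
        nlinarith [h9]
      have hpos : (0:ℝ) ≤ (C₁ * a / ℓ ^ 2) * ((k:ℝ) ^ 2)⁻¹ := by positivity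
      exact mul_le_of_le_one_left hpos h26
    have hB2 : (∑ k ∈ t.filter (fun k => ¬ k ≤ N), ((k:ℝ) ^ 2)⁻¹) ≤ 2 / ((N:ℝ) + 1) := by
      have hsub : t.filter (fun k => ¬ k ≤ N) ⊆ Finset.Ioo N (K + 1) := by
        intro k hk
        rw [Finset.mem_filter, ht, Finset.mem_Icc] at hk
        rw [Finset.mem_Ioo]
        omega
      calc (∑ k ∈ t.filter (fun k => ¬ k ≤ N), ((k:ℝ) ^ 2)⁻¹)
          ≤ ∑ k ∈ Finset.Ioo N (K + 1), ((k:ℝ) ^ 2)⁻¹ :=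
            Finset.sum_le_sum_of_subset_of_nonneg hsub (fun i _ _ => by positivity)
        _ ≤ 2 / ((N:ℝ) + 1) := sum_Ioo_inv_sq_le N (K + 1)
    calc (∑ k ∈ t.filter (fun k => ¬ k ≤ N), (26 * (k:ℝ) ^ 2) * g k)
        ≤ ∑ k ∈ t.filter (fun k => ¬ k ≤ N), (C₁ * a / ℓ ^ 2) * ((k:ℝ) ^ 2)⁻¹ :=
          Finset.sum_le_sum hB1
      _ = (C₁ * a / ℓ ^ 2) * ∑ k ∈ t.filter (fun k => ¬ k ≤ N), ((k:ℝ) ^ 2)⁻¹ := by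
          rw [Finset.mul_sum]
      _ ≤ (C₁ * a / ℓ ^ 2) * (2 / ((N:ℝ) + 1)) :=
          mul_le_mul_of_nonneg_left hB2 (by positivity)
      _ ≤ (C₁ * a / ℓ ^ 2) * (2 * ℓ) := by
          apply mul_le_mul_of_nonneg_left _ (by positivity)
          rw [div_le_iff₀ (by positivity)]
          have : (1:ℝ) ≤ ℓ * ((N:ℝ) + 1) := by
            have h1 : ℓ * ℓ⁻¹ = 1 := mul_inv_cancel₀ (ne_of_gt hℓ)
            nlinarith
          nlinarith
      _ = 2 * C₁ * a / ℓ := by field_simp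
  -- put everything together
  calc (∑ p ∈ s, if p ≠ 0 then ‖W p‖ / ‖lat p‖ ^ 2 else 0)
      ≤ ∑ p ∈ s', g (latK p) := hstep1
    _ = ∑ k ∈ t, ∑ p ∈ s'.filter (fun p => latK p = k), g k := hstep2
    _ ≤ ∑ k ∈ t, (26 * (k:ℝ) ^ 2) * g k := hstep3
    _ = (∑ k ∈ t.filter (fun k => k ≤ N), (26 * (k:ℝ) ^ 2) * g k)
        + (∑ k ∈ t.filter (fun k => ¬ k ≤ N), (26 * (k:ℝ) ^ 2) * g k) :=
        (Finset.sum_filter_add_sum_filter_not t (fun k => k ≤ N) _).symm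
    _ ≤ 2 * C₁ * a / ℓ + 2 * C₁ * a / ℓ := add_le_add hA hB
    _ = 4 * C₁ * a / ℓ := by ring
end

section
/- There is a universal constant C such that for all p ∈ ℝ³ and all R₀ ≥ 2|p| + 2: Σ_{k ∈ 2πℤ³ : |p−k| ≥ R₀} (|p−k|² − |p|²)^{−2} ≤ C·R₀^{−1}. (On this range every denominator is strictly positive, since |p−k| ≥ R₀ > |p|.) -/
/-! ### Auxiliary material -/

section Aux

/-- Partial sums of the tail of `Σ 1/n²` starting at `N`. -/
lemma aux_real_tail_partial (N : ℕ) (hN : 1 ≤ N) (K : ℕ) :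
    ∑ i ∈ Finset.range K, (if N ≤ i then ((i:ℝ)^2)⁻¹ else 0) ≤ 2/N - 2/(max K N) := by
  induction K with
  | zero => simp
  | succ K ih =>
    rw [Finset.sum_range_succ]
    by_cases hK : N ≤ K
    · rw [if_pos hK]
      have hK1 : (1:ℝ) ≤ K := by exact_mod_cast hN.trans hK
      rw [max_eq_left hK] at ih
      rw [max_eq_left (show N ≤ K + 1 by omega)]
      have key : ((K:ℝ)^2)⁻¹ ≤ 2/(K:ℝ) - 2/((K:ℝ)+1) := by
        have e : 2/(K:ℝ) - 2/((K:ℝ)+1) = 2/((K:ℝ)*((K:ℝ)+1)) := by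
          field_simp
          ring
        rw [e, inv_eq_one_div, div_le_div_iff₀ (by positivity) (by positivity)]
        nlinarith
      push_cast
      linarith
    · rw [if_neg hK]
      rw [max_eq_right (show K ≤ N by omega)] at ih
      rw [max_eq_right (show K + 1 ≤ N by omega)]
      linarith

/-- Tail of `Σ 1/n²` in `ℝ≥0∞`. -/
lemma aux_enn_tail (N : ℕ) (hN : 1 ≤ N) :
    ∑' n : ℕ, (if N ≤ n then ((n:ENNReal)^2)⁻¹ else 0) ≤ ENNReal.ofReal (2/N) := by
  have hterm : ∀ n : ℕ, (if N ≤ n then ((n:ENNReal)^2)⁻¹ else 0)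
      = ENNReal.ofReal (if N ≤ n then ((n:ℝ)^2)⁻¹ else 0) := by
    intro n
    by_cases h : N ≤ n
    · have hn : (0:ℝ) < n := by
        exact_mod_cast Nat.lt_of_lt_of_le (Nat.lt_of_lt_of_le Nat.zero_lt_one hN) h
      rw [if_pos h, if_pos h, ENNReal.ofReal_inv_of_pos (by positivity), ENNReal.ofReal_pow hn.le,
        ENNReal.ofReal_natCast]
    · simp [h]
  apply ENNReal.tsum_le_of_sum_range_le
  intro K
  calc ∑ i ∈ Finset.range K, (if N ≤ i then ((i:ENNReal)^2)⁻¹ else 0)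
      = ENNReal.ofReal (∑ i ∈ Finset.range K, (if N ≤ i then ((i:ℝ)^2)⁻¹ else 0)) := by
        rw [ENNReal.ofReal_sum_of_nonneg (fun i _ => by positivity)]
        exact Finset.sum_congr rfl fun i _ => hterm i
    _ ≤ ENNReal.ofReal (2/N) := ENNReal.ofReal_le_ofReal (by
        calc _ ≤ 2/(N:ℝ) - 2/(max K N) := aux_real_tail_partial N hN K
          _ ≤ 2/N := by
            have h1 : (1:ℕ) ≤ max K N := le_max_of_le_right hN
            have : (0:ℝ) < max K N := by exact_mod_cast Nat.lt_of_lt_of_le Nat.zero_lt_one h1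
            have : (0:ℝ) ≤ 2/(max K N) := by positivity
            linarith)

/-- Tail of `Σ 1/a²` over `ℤ`, in `ℝ≥0∞`. -/
lemma aux_enn_int (N : ℕ) (hN : 1 ≤ N) :
    ∑' a : ℤ, (if N ≤ a.natAbs then ((a.natAbs:ENNReal)^2)⁻¹ else 0)
      ≤ ENNReal.ofReal (4/N) := by
  set f : ℤ → ENNReal := fun a => if N ≤ a.natAbs then ((a.natAbs:ENNReal)^2)⁻¹ else 0 with hf
  rw [tsum_of_nat_of_neg_add_one ENNReal.summable ENNReal.summable]
  have h1 : ∑' n : ℕ, f (n : ℤ) ≤ ENNReal.ofReal (2/N) := by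
    have : ∀ n : ℕ, f (n:ℤ) = (if N ≤ n then ((n:ENNReal)^2)⁻¹ else 0) := by
      intro n; simp [hf]
    rw [tsum_congr this]
    exact aux_enn_tail N hN
  have h2 : ∑' n : ℕ, f (-((n:ℤ) + 1)) ≤ ENNReal.ofReal (2/N) := by
    have heq : ∀ n : ℕ, f (-((n:ℤ) + 1)) = (if N ≤ n + 1 then (((n+1:ℕ):ENNReal)^2)⁻¹ else 0) := by
      intro n
      have h' : (-((n:ℤ) + 1)).natAbs = n + 1 := by omega
      rw [hf]
      simp only [h']
    rw [tsum_congr heq]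
    calc ∑' n : ℕ, (if N ≤ n + 1 then (((n+1:ℕ):ENNReal)^2)⁻¹ else 0)
        ≤ ∑' n : ℕ, (if N ≤ n then ((n:ENNReal)^2)⁻¹ else 0) :=
          ENNReal.tsum_comp_le_tsum_of_injective (f := fun n : ℕ => n + 1)
            (add_left_injective 1) _
      _ ≤ ENNReal.ofReal (2/N) := aux_enn_tail N hN
  calc _ ≤ ENNReal.ofReal (2/N) + ENNReal.ofReal (2/N) := add_le_add h1 h2
    _ = ENNReal.ofReal (4/N) := by
        rw [← ENNReal.ofReal_add (by positivity) (by positivity)]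
        congr 1
        ring

/-- Summing a constant over the integers of absolute value at most `A`. -/
lemma aux_box_sum (A : ℕ) (x : ENNReal) :
    ∑' b : ℤ, (if b.natAbs ≤ A then x else 0) = (2*A+1 : ℕ) * x := by
  rw [tsum_eq_sum (s := Finset.Icc (-(A:ℤ)) (A:ℤ)) (by
    intro b hb
    rw [if_neg]
    simp only [Finset.mem_Icc] at hb
    omega)]
  rw [Finset.sum_congr rfl (fun b hb => by
    simp only [Finset.mem_Icc] at hb
    rw [if_pos (by omega)])]
  rw [Finset.sum_const, Int.card_Icc, show ((A:ℤ) + 1 - -A).toNat = 2*A+1 by omega,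
    nsmul_eq_mul]

/-- The summand of one of the three coordinate slices, on `ℤ³ ≅ ℤ × ℤ × ℤ`. -/
noncomputable def auxPsi (N : ℕ) : ℤ×ℤ×ℤ → ENNReal := fun x =>
  if N ≤ x.1.natAbs ∧ x.2.1.natAbs ≤ x.1.natAbs ∧ x.2.2.natAbs ≤ x.1.natAbs
  then ((x.1.natAbs:ENNReal)^4)⁻¹ else 0

lemma aux_key3 (N : ℕ) (hN : 1 ≤ N) :
    ∑' x : ℤ×ℤ×ℤ, auxPsi N x ≤ ENNReal.ofReal (36/N) := by
  rw [ENNReal.tsum_prod']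
  have inner : ∀ a : ℤ, ∑' y : ℤ×ℤ, auxPsi N (a, y)
      = if N ≤ a.natAbs then
          ((2*a.natAbs+1 : ℕ) : ENNReal) * (((2*a.natAbs+1 : ℕ) : ENNReal) * ((a.natAbs:ENNReal)^4)⁻¹)
        else 0 := by
    intro a
    by_cases h : N ≤ a.natAbs
    · rw [ENNReal.tsum_prod', if_pos h]
      have h1 : ∀ b : ℤ, ∑' c : ℤ, auxPsi N (a, b, c)
          = if b.natAbs ≤ a.natAbs
            then ((2*a.natAbs+1 : ℕ) : ENNReal) * ((a.natAbs:ENNReal)^4)⁻¹ else 0 := by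
        intro b
        by_cases hb : b.natAbs ≤ a.natAbs
        · rw [if_pos hb, ← aux_box_sum a.natAbs (((a.natAbs:ENNReal))^4)⁻¹]
          refine tsum_congr fun c => ?_
          simp only [auxPsi, h, hb, true_and]
        · rw [if_neg hb]
          have : ∀ c : ℤ, auxPsi N (a, b, c) = 0 := fun c => by
            simp only [auxPsi]
            rw [if_neg (by tauto)]
          simp [this]
      rw [tsum_congr h1, aux_box_sum]
    · have : ∀ y : ℤ×ℤ, auxPsi N (a, y) = 0 := fun y => by
        simp only [auxPsi]
        rw [if_neg (by tauto)]
      rw [if_neg h]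
      simp [this]
  rw [tsum_congr inner]
  have hle : ∀ a : ℤ, (if N ≤ a.natAbs then
          ((2*a.natAbs+1 : ℕ) : ENNReal) * (((2*a.natAbs+1 : ℕ) : ENNReal) * ((a.natAbs:ENNReal)^4)⁻¹)
        else 0) ≤ 9 * (if N ≤ a.natAbs then ((a.natAbs:ENNReal)^2)⁻¹ else 0) := by
    intro a
    by_cases h : N ≤ a.natAbs
    · rw [if_pos h, if_pos h]
      set x : ENNReal := (a.natAbs : ENNReal) with hx
      have hA1 : 1 ≤ a.natAbs := hN.trans h
      have hc : ((2*a.natAbs+1 : ℕ) : ENNReal) ≤ 3*x := by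
        rw [hx]
        push_cast
        calc (2*(a.natAbs:ENNReal)+1) ≤ 2*(a.natAbs:ENNReal)+(a.natAbs:ENNReal) := by
              gcongr
              exact_mod_cast hA1
          _ = 3*(a.natAbs:ENNReal) := by ring
      have hx0 : x ≠ 0 := by
        rw [hx]; exact Nat.cast_ne_zero.mpr (by omega)
      have hxt : x ≠ ⊤ := by rw [hx]; exact ENNReal.natCast_ne_top _
      calc ((2*a.natAbs+1 : ℕ) : ENNReal) * (((2*a.natAbs+1 : ℕ) : ENNReal) * ((a.natAbs:ENNReal)^4)⁻¹)
          ≤ (3*x) * ((3*x) * ((x^4)⁻¹)) := by gcongr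
        _ = 9 * (x^2 * (x^4)⁻¹) := by ring
        _ = 9 * (x^2)⁻¹ := by
            congr 1
            rw [show x^4 = x^2 * x^2 by ring,
              ENNReal.mul_inv (Or.inl (pow_ne_zero _ hx0)) (Or.inl (ENNReal.pow_ne_top hxt)),
              ← mul_assoc, ENNReal.mul_inv_cancel (pow_ne_zero _ hx0) (ENNReal.pow_ne_top hxt),
              one_mul]
    · simp [h]
  calc _ ≤ ∑' a : ℤ, 9 * (if N ≤ a.natAbs then ((a.natAbs:ENNReal)^2)⁻¹ else 0) :=
        ENNReal.tsum_le_tsum hle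
    _ = 9 * ∑' a : ℤ, (if N ≤ a.natAbs then ((a.natAbs:ENNReal)^2)⁻¹ else 0) :=
        ENNReal.tsum_mul_left
    _ ≤ 9 * ENNReal.ofReal (4/N) := by gcongr; exact aux_enn_int N hN
    _ = ENNReal.ofReal (36/N) := by
        rw [show (9 : ENNReal) = ENNReal.ofReal 9 by norm_num,
          ← ENNReal.ofReal_mul (by norm_num)]
        congr 1
        ring

/-- The sup-norm of a lattice point, as a natural number. -/
def auxMn (m : Fin 3 → ℤ) : ℕ := max (m 0).natAbs (max (m 1).natAbs (m 2).natAbs)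

def auxE0 : (Fin 3 → ℤ) ≃ ℤ×ℤ×ℤ where
  toFun m := (m 0, m 1, m 2)
  invFun x := ![x.1, x.2.1, x.2.2]
  left_inv m := by funext i; fin_cases i <;> rfl
  right_inv x := rfl

def auxE1 : (Fin 3 → ℤ) ≃ ℤ×ℤ×ℤ where
  toFun m := (m 1, m 0, m 2)
  invFun x := ![x.2.1, x.1, x.2.2]
  left_inv m := by funext i; fin_cases i <;> rfl
  right_inv x := rfl

def auxE2 : (Fin 3 → ℤ) ≃ ℤ×ℤ×ℤ where
  toFun m := (m 2, m 0, m 1)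
  invFun x := ![x.2.1, x.2.2, x.1]
  left_inv m := by funext i; fin_cases i <;> rfl
  right_inv x := rfl

/-- The key lattice-tail estimate: `Σ_{‖m‖_∞ ≥ N} ‖m‖_∞⁻⁴ ≤ 108/N`. -/
lemma aux_enn_slice (N : ℕ) (hN : 1 ≤ N) :
    ∑' m : Fin 3 → ℤ, (if N ≤ auxMn m then ((auxMn m : ENNReal)^4)⁻¹ else 0)
      ≤ ENNReal.ofReal (108/N) := by
  have hpt : ∀ m : Fin 3 → ℤ, (if N ≤ auxMn m then ((auxMn m : ENNReal)^4)⁻¹ else 0)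
      ≤ auxPsi N (auxE0 m) + auxPsi N (auxE1 m) + auxPsi N (auxE2 m) := by
    intro m
    by_cases h : N ≤ auxMn m
    · have h012 : auxMn m = (m 0).natAbs ∨ auxMn m = (m 1).natAbs ∨ auxMn m = (m 2).natAbs := by
        unfold auxMn; omega
      rcases h012 with h0 | h1 | h2
      · calc (if N ≤ auxMn m then ((auxMn m : ENNReal)^4)⁻¹ else 0) = auxPsi N (auxE0 m) := by
              rw [if_pos h, auxPsi, auxE0]
              show _ = if N ≤ (m 0).natAbs ∧ (m 1).natAbs ≤ (m 0).natAbs ∧ (m 2).natAbs ≤ (m 0).natAbs then (((m 0).natAbs:ENNReal)^4)⁻¹ else 0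
              rw [if_pos ⟨by omega, by unfold auxMn at h0; omega, by unfold auxMn at h0; omega⟩, h0]
          _ ≤ _ := le_add_of_le_of_nonneg (le_add_of_le_of_nonneg le_rfl (zero_le)) (zero_le)
      · calc (if N ≤ auxMn m then ((auxMn m : ENNReal)^4)⁻¹ else 0) = auxPsi N (auxE1 m) := by
              rw [if_pos h, auxPsi, auxE1]
              show _ = if N ≤ (m 1).natAbs ∧ (m 0).natAbs ≤ (m 1).natAbs ∧ (m 2).natAbs ≤ (m 1).natAbs then (((m 1).natAbs:ENNReal)^4)⁻¹ else 0
              rw [if_pos ⟨by omega, by unfold auxMn at h1; omega, by unfold auxMn at h1; omega⟩, h1]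
          _ ≤ _ := le_add_of_le_of_nonneg (le_add_of_nonneg_of_le (zero_le) le_rfl) (zero_le)
      · calc (if N ≤ auxMn m then ((auxMn m : ENNReal)^4)⁻¹ else 0) = auxPsi N (auxE2 m) := by
              rw [if_pos h, auxPsi, auxE2]
              show _ = if N ≤ (m 2).natAbs ∧ (m 0).natAbs ≤ (m 2).natAbs ∧ (m 1).natAbs ≤ (m 2).natAbs then (((m 2).natAbs:ENNReal)^4)⁻¹ else 0
              rw [if_pos ⟨by omega, by unfold auxMn at h2; omega, by unfold auxMn at h2; omega⟩, h2]
          _ ≤ _ := le_add_of_nonneg_of_le (zero_le) le_rfl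
    · rw [if_neg h]; exact zero_le
  calc ∑' m : Fin 3 → ℤ, (if N ≤ auxMn m then ((auxMn m : ENNReal)^4)⁻¹ else 0)
      ≤ ∑' m : Fin 3 → ℤ, (auxPsi N (auxE0 m) + auxPsi N (auxE1 m) + auxPsi N (auxE2 m)) :=
        ENNReal.tsum_le_tsum hpt
    _ = (∑' m, auxPsi N (auxE0 m)) + (∑' m, auxPsi N (auxE1 m)) + (∑' m, auxPsi N (auxE2 m)) := by
        rw [ENNReal.tsum_add, ENNReal.tsum_add]
    _ = (∑' x : ℤ×ℤ×ℤ, auxPsi N x) + (∑' x : ℤ×ℤ×ℤ, auxPsi N x) + (∑' x : ℤ×ℤ×ℤ, auxPsi N x) := by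
        rw [auxE0.tsum_eq (auxPsi N), auxE1.tsum_eq (auxPsi N), auxE2.tsum_eq (auxPsi N)]
    _ ≤ ENNReal.ofReal (36/N) + ENNReal.ofReal (36/N) + ENNReal.ofReal (36/N) := by
        gcongr <;> exact aux_key3 N hN
    _ = ENNReal.ofReal (108/N) := by
        rw [← ENNReal.ofReal_add (by positivity) (by positivity),
          ← ENNReal.ofReal_add (by positivity) (by positivity)]
        congr 1
        ring

/-! ### Geometry of the lattice in `ℝ³` -/

lemma aux_abs_coord_le (x : EuclideanSpace ℝ (Fin 3)) (j : Fin 3) : |x j| ≤ ‖x‖ := by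
  rw [EuclideanSpace.norm_eq x]
  rw [show |x j| = Real.sqrt (‖x j‖^2) by
    rw [Real.sqrt_sq_eq_abs]; simp [Real.norm_eq_abs]]
  apply Real.sqrt_le_sqrt
  exact Finset.single_le_sum (f := fun i => ‖x i‖^2) (fun i _ => sq_nonneg _) (Finset.mem_univ j)

lemma aux_abs_coord_lat (m : Fin 3 → ℤ) (j : Fin 3) :
    |lat m j| = 2 * Real.pi * ((m j).natAbs : ℝ) := by
  have h : lat m j = 2 * Real.pi * (m j : ℝ) := rfl
  rw [h, abs_mul, Nat.cast_natAbs]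
  have hpi : (0:ℝ) < 2 * Real.pi := by positivity
  rw [abs_of_pos hpi]
  push_cast
  ring

lemma aux_coord_le_Mn (m : Fin 3 → ℤ) (j : Fin 3) : (m j).natAbs ≤ auxMn m := by
  fin_cases j
  · exact le_max_left _ _
  · exact le_trans (le_max_left _ _) (le_max_right _ _)
  · exact le_trans (le_max_right _ _) (le_max_right _ _)

lemma aux_norm_lat_le (m : Fin 3 → ℤ) : ‖lat m‖ ≤ 11 * (auxMn m : ℝ) := by
  have hMn : (0:ℝ) ≤ (auxMn m : ℝ) := Nat.cast_nonneg _
  rw [EuclideanSpace.norm_eq]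
  have hbound : ∀ i : Fin 3, ‖lat m i‖^2 ≤ (6.3 * (auxMn m : ℝ))^2 := by
    intro i
    have h2 : ((m i).natAbs : ℝ) ≤ (auxMn m : ℝ) := by exact_mod_cast aux_coord_le_Mn m i
    have h1 : ‖lat m i‖ ≤ 6.3 * (auxMn m : ℝ) := by
      rw [Real.norm_eq_abs, aux_abs_coord_lat]
      have hpi : Real.pi ≤ 3.15 := Real.pi_lt_d2.le
      have h0 : (0:ℝ) ≤ ((m i).natAbs : ℝ) := Nat.cast_nonneg _
      nlinarith [Real.pi_pos]
    exact pow_le_pow_left₀ (norm_nonneg _) h1 2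
  have hsum : ∑ i : Fin 3, ‖lat m i‖^2 ≤ 3 * (6.3 * (auxMn m : ℝ))^2 := by
    calc ∑ i : Fin 3, ‖lat m i‖^2 ≤ ∑ _i : Fin 3, (6.3 * (auxMn m : ℝ))^2 :=
          Finset.sum_le_sum fun i _ => hbound i
      _ = 3 * (6.3 * (auxMn m : ℝ))^2 := by
          rw [Finset.sum_const]
          simp [Finset.card_univ]
  calc Real.sqrt (∑ i : Fin 3, ‖lat m i‖^2) ≤ Real.sqrt ((11 * (auxMn m : ℝ))^2) := by
        apply Real.sqrt_le_sqrt
        nlinarith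
    _ = 11 * (auxMn m : ℝ) := Real.sqrt_sq (by positivity)

lemma aux_norm_lat_ge (m : Fin 3 → ℤ) : 6 * (auxMn m : ℝ) ≤ ‖lat m‖ := by
  have h012 : auxMn m = (m 0).natAbs ∨ auxMn m = (m 1).natAbs ∨ auxMn m = (m 2).natAbs := by
    unfold auxMn; omega
  have key : ∀ j : Fin 3, auxMn m = (m j).natAbs → 6 * (auxMn m : ℝ) ≤ ‖lat m‖ := by
    intro j hj
    calc 6 * (auxMn m : ℝ) = 6 * ((m j).natAbs : ℝ) := by rw [hj]
      _ ≤ 2 * Real.pi * ((m j).natAbs : ℝ) := by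
          have h6 : (6:ℝ) ≤ 2 * Real.pi := by nlinarith [Real.pi_gt_three]
          have h0 : (0:ℝ) ≤ ((m j).natAbs : ℝ) := Nat.cast_nonneg _
          nlinarith
      _ = |lat m j| := (aux_abs_coord_lat m j).symm
      _ ≤ ‖lat m‖ := aux_abs_coord_le _ j
  rcases h012 with h | h | h
  · exact key 0 h
  · exact key 1 h
  · exact key 2 h

end Aux

theorem far_momentum_lattice_sum_estimate :
    ∃ C : ℝ, 0 < C ∧
      ∀ (p : EuclideanSpace ℝ (Fin 3)) (R₀ : ℝ), 2 * ‖p‖ + 2 ≤ R₀ →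
        (∑' k : Fin 3 → ℤ,
            if R₀ ≤ ‖p - lat k‖ then 1 / (‖p - lat k‖ ^ 2 - ‖p‖ ^ 2) ^ 2 else 0)
          ≤ C * R₀⁻¹ := by
  refine ⟨2376, by norm_num, fun p R₀ hR => ?_⟩
  have hp0 : (0:ℝ) ≤ ‖p‖ := norm_nonneg p
  have hR2 : (2:ℝ) ≤ R₀ := by linarith
  have hR0 : (0:ℝ) < R₀ := by linarith
  set f : (Fin 3 → ℤ) → ℝ :=
    fun k => if R₀ ≤ ‖p - lat k‖ then 1 / (‖p - lat k‖ ^ 2 - ‖p‖ ^ 2) ^ 2 else 0 with hf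
  have hf0 : ∀ k, 0 ≤ f k := by
    intro k
    rw [hf]
    dsimp only
    split_ifs
    · positivity
    · exact le_rfl
  set N : ℕ := ⌈R₀/22⌉₊ with hNdef
  have hN : 1 ≤ N := Nat.one_le_ceil_iff.mpr (by positivity)
  have hNR : R₀/22 ≤ (N:ℝ) := Nat.le_ceil _
  -- pointwise bound
  have hpt : ∀ k : Fin 3 → ℤ, ENNReal.ofReal (f k)
      ≤ (if N ≤ auxMn k then ((auxMn k : ENNReal)^4)⁻¹ else 0) := by
    intro k
    by_cases hdk : R₀ ≤ ‖p - lat k‖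
    · set d : ℝ := ‖p - lat k‖ with hd
      have hd2 : (2:ℝ) ≤ d := le_trans hR2 hdk
      have hd0 : (0:ℝ) < d := by linarith
      have hp_half : ‖p‖ ≤ d/2 := by linarith
      have hlat_low : d - ‖p‖ ≤ ‖lat k‖ := by
        have := norm_sub_le p (lat k)
        linarith
      have hlat_up : ‖lat k‖ ≤ ‖p‖ + d := by
        have h1 : ‖lat k‖ - ‖p‖ ≤ ‖lat k - p‖ := norm_sub_norm_le _ _
        have h2 : ‖lat k - p‖ = d := by rw [hd, norm_sub_rev]
        linarith
      have hMn_lb : d/22 ≤ (auxMn k : ℝ) := by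
        have h1 := aux_norm_lat_le k
        linarith
      have hNle : N ≤ auxMn k := by
        rw [hNdef]
        apply Nat.ceil_le.mpr
        calc R₀/22 ≤ d/22 := by linarith
          _ ≤ (auxMn k : ℝ) := hMn_lb
      have hMn1 : 1 ≤ auxMn k := le_trans hN hNle
      have hMn1R : (1:ℝ) ≤ (auxMn k : ℝ) := by exact_mod_cast hMn1
      have hd4 : 4 * (auxMn k : ℝ) ≤ d := by
        have h1 := aux_norm_lat_ge k
        linarith
      -- main value bound
      have hval : f k ≤ ((auxMn k : ℝ)^4)⁻¹ := by
        rw [hf]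
        dsimp only
        rw [if_pos hdk, ← hd]
        have hpsq : ‖p‖^2 ≤ d^2/4 := by nlinarith
        have hden : 12 * (auxMn k : ℝ)^2 ≤ d^2 - ‖p‖^2 := by nlinarith
        have hMnpos : (0:ℝ) < (auxMn k : ℝ)^4 := by positivity
        have hkey : (auxMn k : ℝ)^4 ≤ (d^2 - ‖p‖^2)^2 := by nlinarith
        rw [one_div]
        exact inv_anti₀ hMnpos hkey
      rw [if_pos hNle]
      calc ENNReal.ofReal (f k) ≤ ENNReal.ofReal (((auxMn k : ℝ)^4)⁻¹) :=
            ENNReal.ofReal_le_ofReal hval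
        _ = ((auxMn k : ENNReal)^4)⁻¹ := by
            rw [ENNReal.ofReal_inv_of_pos (by positivity), ENNReal.ofReal_pow (by positivity),
              ENNReal.ofReal_natCast]
    · have : f k = 0 := by rw [hf]; dsimp only; rw [if_neg hdk]
      rw [this]
      simp
  have hfinal : ENNReal.ofReal (∑' k, f k) ≤ ENNReal.ofReal (2376 * R₀⁻¹) := by
    by_cases hs : Summable f
    · rw [ENNReal.ofReal_tsum_of_nonneg hf0 hs]
      calc ∑' k, ENNReal.ofReal (f k)
          ≤ ∑' k : Fin 3 → ℤ, (if N ≤ auxMn k then ((auxMn k : ENNReal)^4)⁻¹ else 0) :=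
            ENNReal.tsum_le_tsum hpt
        _ ≤ ENNReal.ofReal (108/N) := aux_enn_slice N hN
        _ ≤ ENNReal.ofReal (2376 * R₀⁻¹) := by
            apply ENNReal.ofReal_le_ofReal
            have hN0 : (0:ℝ) < (N:ℝ) := by
              calc (0:ℝ) < R₀/22 := by positivity
                _ ≤ (N:ℝ) := hNR
            rw [div_le_iff₀ hN0]
            rw [show 2376 * R₀⁻¹ * (N:ℝ) = 2376 * ((N:ℝ)/R₀) by field_simp]
            rw [show (108:ℝ) = 2376 * (1/22) by norm_num]
            apply mul_le_mul_of_nonneg_left _ (by norm_num)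
            rw [div_le_div_iff₀ (by norm_num) hR0]
            linarith [hNR]
    · rw [tsum_eq_zero_of_not_summable hs]
      apply ENNReal.ofReal_le_ofReal
      positivity
  have h2376 : (0:ℝ) ≤ 2376 * R₀⁻¹ := by positivity
  exact (ENNReal.ofReal_le_ofReal_iff h2376).mp hfinal
end
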